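/- Let X₁,…,Xₙ, Y₁,…,Yₙ be i.i.d. standard normal random variables. Then for every λσ > 0 and n ≥ 1, P[∑ₖ |XₖYₖ| ≥ nλσ] ≤ exp{−n·sup_{κ∈(0,1)} (κλσ − log F(κ))}, where F(κ) = (4/√(2π))∫₀^∞ exp{−(1/2)(1−κ²)x²}Φ(κx) dx. -/

import Mathlib

/-!
Chernoff: for `0 ≤ κ < 1`, `P[∑ₖ |XₖYₖ| ≥ n a] ≤ e^{-nκa} (E e^{κ|XY|})ⁿ` by independence. The
moment generating function is computed by integrating out `Y` first:
`E e^{c|Y|} = 2 e^{c²/2} Φ(c)`, applied with `c = κ|X|`, leaves a Gaussian integral in `X` that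
is exactly `F(κ)`. Finally, `E e^{κ|XY|} ≥ 1` makes the exponents `κa - log F(κ)` bounded, and
continuity of `exp` lets the bound pass to their supremum.
-/

open Real MeasureTheory ProbabilityTheory

/-- The standard normal cumulative distribution function. -/
noncomputable def stdNormalCDF (x : ℝ) : ℝ :=
  ∫ t in Set.Iic x, (1 / Real.sqrt (2 * π)) * Real.exp (-t ^ 2 / 2)

/-- `F(κ) = (4/√(2π)) ∫₀^∞ exp{−(1/2)(1−κ²)x²} Φ(κx) dx`. -/
noncomputable def Fkappa (κ : ℝ) : ℝ :=
  (4 / Real.sqrt (2 * π)) * ∫ x in Set.Ioi (0:ℝ),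
    Real.exp (-(1/2) * (1 - κ ^ 2) * x ^ 2) * stdNormalCDF (κ * x)

open Set

lemma gaussianPDFReal_zero_one (x : ℝ) :
    gaussianPDFReal 0 1 x = (√(2 * π))⁻¹ * exp (-x ^ 2 / 2) := by
  simp [gaussianPDFReal]

lemma integral_gaussianReal_zero_one (f : ℝ → ℝ) :
    ∫ x, f x ∂gaussianReal 0 1 = (√(2 * π))⁻¹ * ∫ x, exp (-x ^ 2 / 2) * f x := by
  simp only [integral_gaussianReal_eq_integral_smul one_ne_zero, ← integral_const_mul,
    gaussianPDFReal_zero_one, smul_eq_mul, mul_assoc]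

lemma integrable_gaussianReal_zero_one_iff (f : ℝ → ℝ) :
    Integrable f (gaussianReal 0 1) ↔ Integrable (fun x => exp (-x ^ 2 / 2) * f x) := by
  rw [gaussianReal_of_var_ne_zero 0 one_ne_zero,
    integrable_withDensity_iff_integrable_smul' (measurable_gaussianPDF 0 1)
      (ae_of_all _ fun _ => gaussianPDF_lt_top)]
  simp only [toReal_gaussianPDF, gaussianPDFReal_zero_one, smul_eq_mul, mul_assoc]
  exact integrable_const_mul_iff (IsUnit.mk0 _ (by positivity)) _

lemma integrable_exp_mul_sq_gaussianReal_zero_one {b : ℝ} (hb : b < 1 / 2) :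
    Integrable (fun x => exp (b * x ^ 2)) (gaussianReal 0 1) := by
  rw [integrable_gaussianReal_zero_one_iff]
  refine (integrable_exp_neg_mul_sq (b := 1 / 2 - b) (by linarith)).congr
    (ae_of_all _ fun x => ?_)
  simp only [← exp_add]; ring_nf

lemma integral_Iic_exp_neg_sq_div_two (c : ℝ) :
    ∫ t in Iic c, exp (-t ^ 2 / 2) = √(2 * π) * stdNormalCDF c := by
  rw [stdNormalCDF, integral_const_mul, ← mul_assoc, mul_one_div_cancel, one_mul]
  exact (Real.sqrt_pos.2 (by positivity)).ne'

/-- Completing the square `c y - y² / 2 = c² / 2 - (y - c)² / 2`. -/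
lemma integral_Ioi_exp_mul_mul_exp_neg_sq_div_two (c : ℝ) :
    ∫ y in Ioi 0, exp (c * y) * exp (-y ^ 2 / 2)
      = √(2 * π) * exp (c ^ 2 / 2) * stdNormalCDF c := by
  have hsq (y : ℝ) :
      exp (c * y) * exp (-y ^ 2 / 2) = exp (c ^ 2 / 2) * exp (-(y - c) ^ 2 / 2) := by
    rw [← exp_add, ← exp_add]; ring_nf
  have hshift : ∫ y in Ioi 0, exp (-(y - c) ^ 2 / 2) = ∫ y in Ioi (-c), exp (-y ^ 2 / 2) := by
    simpa using (measurePreserving_sub_right volume c).setIntegral_preimage_emb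
      (measurableEmbedding_subRight c) (fun y => exp (-y ^ 2 / 2)) (Ioi (-c))
  have hreflect : ∫ y in Ioi (-c), exp (-y ^ 2 / 2) = ∫ y in Iic c, exp (-y ^ 2 / 2) := by
    simp [← integral_comp_neg_Iic]
  simp_rw [hsq]
  rw [integral_const_mul, hshift, hreflect, integral_Iic_exp_neg_sq_div_two]
  ring

lemma integral_exp_mul_abs_gaussianReal_zero_one (c : ℝ) :
    ∫ y, exp (c * |y|) ∂gaussianReal 0 1 = 2 * exp (c ^ 2 / 2) * stdNormalCDF c := by
  have hsymm : ∫ y, exp (-y ^ 2 / 2) * exp (c * |y|)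
      = 2 * ∫ y in Ioi 0, exp (c * y) * exp (-y ^ 2 / 2) := by
    rw [← integral_comp_abs]
    simp_rw [sq_abs, mul_comm]
  rw [integral_gaussianReal_zero_one, hsymm, integral_Ioi_exp_mul_mul_exp_neg_sq_div_two]
  field_simp

lemma integrable_exp_mul_abs_mul_gaussianReal_prod {κ : ℝ} (hκ₀ : 0 ≤ κ) (hκ₁ : κ < 1) :
    Integrable (fun p : ℝ × ℝ => exp (κ * |p.1 * p.2|))
      ((gaussianReal 0 1).prod (gaussianReal 0 1)) := by
  have hsq := integrable_exp_mul_sq_gaussianReal_zero_one (b := κ / 2) (by linarith)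
  refine (hsq.mul_prod hsq).mono' (by fun_prop) (ae_of_all _ fun p => ?_)
  rw [norm_of_nonneg (exp_nonneg _), ← exp_add, exp_le_exp, abs_mul]
  nlinarith [sq_nonneg (|p.1| - |p.2|), sq_abs p.1, sq_abs p.2]

lemma mgf_abs_mul_gaussianReal_prod {κ : ℝ} (hκ₀ : 0 ≤ κ) (hκ₁ : κ < 1) :
    mgf (fun p : ℝ × ℝ => |p.1 * p.2|) ((gaussianReal 0 1).prod (gaussianReal 0 1)) κ
      = Fkappa κ := by
  have hinner (x : ℝ) : ∫ y, exp (κ * |x * y|) ∂gaussianReal 0 1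
      = 2 * exp ((κ * |x|) ^ 2 / 2) * stdNormalCDF (κ * |x|) := by
    rw [← integral_exp_mul_abs_gaussianReal_zero_one]
    simp_rw [abs_mul, mul_assoc]
  have hsymm : ∫ x, exp (-x ^ 2 / 2) * (2 * exp ((κ * |x|) ^ 2 / 2) * stdNormalCDF (κ * |x|))
      = 2 * ∫ x in Ioi 0, 2 * (exp (-(1 / 2) * (1 - κ ^ 2) * x ^ 2) * stdNormalCDF (κ * x)) := by
    rw [← integral_comp_abs]
    congr 1 with x
    rw [mul_pow, sq_abs,
      show -(1 / 2) * (1 - κ ^ 2) * x ^ 2 = -x ^ 2 / 2 + κ ^ 2 * x ^ 2 / 2 by ring, exp_add]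
    ring
  rw [mgf, integral_prod _ (integrable_exp_mul_abs_mul_gaussianReal_prod hκ₀ hκ₁)]
  simp_rw [hinner]
  rw [integral_gaussianReal_zero_one, hsymm, integral_const_mul, Fkappa]
  ring

lemma one_le_Fkappa {κ : ℝ} (hκ₀ : 0 ≤ κ) (hκ₁ : κ < 1) : 1 ≤ Fkappa κ := by
  rw [← mgf_abs_mul_gaussianReal_prod hκ₀ hκ₁]
  simpa [mgf_const] using mgf_mono_of_nonneg (X := fun _ => 0)
    (ae_of_all _ fun p => abs_nonneg _) hκ₀ (integrable_exp_mul_abs_mul_gaussianReal_prod hκ₀ hκ₁)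

lemma measureReal_sum_ge_le_exp_mul_mgf_pow {ι E : Type*} [Fintype ι] [MeasurableSpace E]
    (ν : Measure E) [IsProbabilityMeasure ν] {f : E → ℝ} (hf : Measurable f) {t : ℝ}
    (ht : 0 ≤ t) (hint : Integrable (fun x => exp (t * f x)) ν) (c : ℝ) :
    (Measure.pi fun _ : ι => ν).real {ω | c ≤ ∑ i, f (ω i)}
      ≤ exp (-t * c) * mgf f ν t ^ Fintype.card ι := by
  set X : ι → (ι → E) → ℝ := fun i ω => f (ω i)
  have hX : ∀ i, Measurable (X i) := fun i => hf.comp (measurable_pi_apply i)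
  have hindep : iIndepFun X (Measure.pi fun _ : ι => ν) :=
    iIndepFun_pi (X := fun _ => f) fun _ => hf.aemeasurable
  have hmgf (i : ι) : mgf (X i) (Measure.pi fun _ : ι => ν) t = mgf f ν t := by
    have hmap := (measurePreserving_eval (fun _ => ν) i).map_eq
    have hcomp := mgf_map (X := f) (t := t) (measurable_pi_apply i).aemeasurable
      (hmap ▸ hint.aestronglyMeasurable)
    rwa [hmap, eq_comm] at hcomp
  have hintX (i : ι) : Integrable (fun ω => exp (t * X i ω)) (Measure.pi fun _ : ι => ν) :=
    (measurePreserving_eval (fun _ => ν) i).integrable_comp_of_integrable hint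
  have hchernoff := measure_ge_le_exp_mul_mgf (X := ∑ i, X i) c ht
    (hindep.integrable_exp_mul_sum (s := Finset.univ) hX fun i _ => hintX i)
  rw [hindep.mgf_sum hX, Finset.prod_congr rfl fun i _ => hmgf i, Finset.prod_const,
    Finset.card_univ] at hchernoff
  simpa [X, Finset.sum_apply] using hchernoff

lemma le_exp_neg_mul_csSup {S : Set ℝ} (hne : S.Nonempty) (hbdd : BddAbove S) {x t : ℝ}
    (ht : 0 ≤ t) (h : ∀ e ∈ S, x ≤ exp (-t * e)) : x ≤ exp (-t * sSup S) := by
  have hanti : Antitone fun e => exp (-t * e) := fun _ _ hee' =>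
    exp_le_exp.2 (mul_le_mul_of_nonpos_left hee' (neg_nonpos.2 ht))
  rw [hanti.map_csSup_of_continuousAt (by fun_prop) hne hbdd]
  exact le_csInf (hne.image _) (forall_mem_image.2 h)

theorem stmt_6_general (n : ℕ) (a : ℝ) :
    (Measure.pi fun _ : Fin n => (gaussianReal 0 1).prod (gaussianReal 0 1))
        {ω : Fin n → ℝ × ℝ | (n : ℝ) * a ≤ ∑ k, |(ω k).1 * (ω k).2|}
      ≤ ENNReal.ofReal
          (Real.exp (-(n : ℝ) * sSup {e : ℝ | ∃ κ ∈ Set.Ioo (0:ℝ) 1,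
              e = κ * a - Real.log (Fkappa κ)})) := by
  set S := {e : ℝ | ∃ κ ∈ Ioo (0:ℝ) 1, e = κ * a - log (Fkappa κ)}
  have hbound : ∀ e ∈ S,
      (Measure.pi fun _ : Fin n => (gaussianReal 0 1).prod (gaussianReal 0 1)).real
        {ω : Fin n → ℝ × ℝ | (n : ℝ) * a ≤ ∑ k, |(ω k).1 * (ω k).2|} ≤ exp (-n * e) := by
    rintro _ ⟨κ, ⟨hκ₀, hκ₁⟩, rfl⟩
    have hF : 0 < Fkappa κ := one_pos.trans_le (one_le_Fkappa hκ₀.le hκ₁)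
    have hchernoff := measureReal_sum_ge_le_exp_mul_mgf_pow (ι := Fin n) _ (by fun_prop)
      hκ₀.le (integrable_exp_mul_abs_mul_gaussianReal_prod hκ₀.le hκ₁) (n * a)
    rw [mgf_abs_mul_gaussianReal_prod hκ₀.le hκ₁, Fintype.card_fin] at hchernoff
    refine hchernoff.trans_eq ?_
    rw [← exp_log (pow_pos hF n), log_pow, ← exp_add]
    ring_nf
  have hbdd : BddAbove S := by
    refine ⟨|a|, ?_⟩
    rintro _ ⟨κ, ⟨hκ₀, hκ₁⟩, rfl⟩
    nlinarith [log_nonneg (one_le_Fkappa hκ₀.le hκ₁), le_abs_self a, abs_nonneg a]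
  have hne : S.Nonempty := ⟨_, 1 / 2, by norm_num, rfl⟩
  rw [← ofReal_measureReal]
  exact ENNReal.ofReal_le_ofReal (le_exp_neg_mul_csSup hne hbdd n.cast_nonneg hbound)

theorem stmt_6 (n : ℕ) (hn : 1 ≤ n) (a : ℝ) (ha : 0 < a) :
    (Measure.pi fun _ : Fin n => (gaussianReal 0 1).prod (gaussianReal 0 1))
        {ω : Fin n → ℝ × ℝ | (n : ℝ) * a ≤ ∑ k, |(ω k).1 * (ω k).2|}
      ≤ ENNReal.ofReal
          (Real.exp (-(n : ℝ) * sSup {e : ℝ | ∃ κ ∈ Set.Ioo (0:ℝ) 1,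
              e = κ * a - Real.log (Fkappa κ)})) :=
  stmt_6_general n a
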